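/- arXiv:2403.07206 — 5 statements merged into one kernel-verified Lean document; each statement's English description precedes it below -/
import Mathlib

section
/- Let d ≥ 1 and n ∈ ℕ, and let ψ : ℝ^d → ℝ be an infinitely differentiable function with compact support such that ∫_{ℝ^d} ψ(ξ) dξ = 1 and ∫_{ℝ^d} ξ^α · ψ(ξ) dξ = 0 for every multi-index α : Fin d → ℕ with 1 ≤ |α| ≤ n (where ξ^α = ∏_i ξ_i^{α_i} and |α| = α_1 + ⋯ + α_d). Then for every polynomial P in d variables with complex coefficients of total degree at most n and every x ∈ ℝ^d, the convolution satisfies ∫_{ℝ^d} P(η)·ψ(x − η) dη = P(x), where P(η) denotes evaluation of P at η. -/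
open MeasureTheory

private lemma totalDegree_sum_le' {σ ι : Type*} (s : Finset ι)
    (f : ι → MvPolynomial σ ℂ) (n : ℕ) (h : ∀ i ∈ s, (f i).totalDegree ≤ n) :
    (∑ i ∈ s, f i).totalDegree ≤ n := by
  induction s using Finset.cons_induction with
  | empty => simp
  | cons a s ha ih =>
    rw [Finset.sum_cons]
    exact (MvPolynomial.totalDegree_add _ _).trans
      (max_le (h a (Finset.mem_cons_self a s)) (ih fun i hi => h i (Finset.mem_cons_of_mem hi)))

private lemma sum_eq_finsupp_sum {d : ℕ} (m : Fin d →₀ ℕ) :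
    (∑ i, m i) = m.sum fun _ e => e :=
  (Finsupp.sum_fintype m (fun _ e => e) fun _ => rfl).symm

private lemma key_int (d n : ℕ)
    (ψ : EuclideanSpace ℝ (Fin d) → ℝ)
    (hψ : Continuous ψ) (hψc : HasCompactSupport ψ)
    (hψ1 : (∫ ξ, ψ ξ) = 1)
    (hψmom : ∀ α : Fin d → ℕ, 1 ≤ (∑ i, α i) → (∑ i, α i) ≤ n →
      (∫ ξ : EuclideanSpace ℝ (Fin d), (∏ i, ξ i ^ α i) * ψ ξ) = 0)
    (Q : MvPolynomial (Fin d) ℂ) (hQ : Q.totalDegree ≤ n) :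
    (∫ ξ : EuclideanSpace ℝ (Fin d),
        MvPolynomial.eval (fun i => (ξ i : ℂ)) Q * (ψ ξ : ℂ))
      = MvPolynomial.eval 0 Q := by
  have hcont : ∀ m : Fin d →₀ ℕ,
      Continuous fun ξ : EuclideanSpace ℝ (Fin d) => (∏ i, ξ i ^ m i) * ψ ξ := by
    intro m
    exact (continuous_finset_prod Finset.univ fun i _ =>
      ((EuclideanSpace.proj (𝕜 := ℝ) i).continuous.pow _)).mul hψ
  have hint : ∀ m : Fin d →₀ ℕ,
      Integrable (fun ξ : EuclideanSpace ℝ (Fin d) =>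
        MvPolynomial.coeff m Q * (((∏ i, ξ i ^ m i) * ψ ξ : ℝ) : ℂ)) volume := by
    intro m
    refine Integrable.const_mul ?_ _
    refine Continuous.integrable_of_hasCompactSupport
      (Complex.continuous_ofReal.comp (hcont m)) ?_
    exact (hψc.mul_left).comp_left (g := Complex.ofReal) Complex.ofReal_zero
  have hrw : ∀ ξ : EuclideanSpace ℝ (Fin d),
      MvPolynomial.eval (fun i => (ξ i : ℂ)) Q * (ψ ξ : ℂ)
        = ∑ m ∈ Q.support, MvPolynomial.coeff m Q * (((∏ i, ξ i ^ m i) * ψ ξ : ℝ) : ℂ) := by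
    intro ξ
    rw [MvPolynomial.eval_eq', Finset.sum_mul]
    refine Finset.sum_congr rfl fun m _ => ?_
    push_cast
    ring
  simp_rw [hrw]
  rw [integral_finset_sum _ fun m _ => hint m]
  have hterm : ∀ m ∈ Q.support,
      (∫ ξ : EuclideanSpace ℝ (Fin d),
          MvPolynomial.coeff m Q * (((∏ i, ξ i ^ m i) * ψ ξ : ℝ) : ℂ))
        = if m = 0 then MvPolynomial.coeff 0 Q else 0 := by
    intro m hm
    rw [integral_const_mul]
    rw [show (∫ ξ : EuclideanSpace ℝ (Fin d), (((∏ i, ξ i ^ m i) * ψ ξ : ℝ) : ℂ))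
        = (((∫ ξ : EuclideanSpace ℝ (Fin d), (∏ i, ξ i ^ m i) * ψ ξ) : ℝ) : ℂ) from
      integral_ofReal]
    by_cases h0 : m = 0
    · subst h0; simp [hψ1]
    · rw [if_neg h0, hψmom (fun i => m i) ?_ ?_]
      · simp
      · obtain ⟨i, hi⟩ := Finsupp.ne_iff.mp h0
        calc 1 ≤ m i := Nat.one_le_iff_ne_zero.mpr (by simpa using hi)
        _ ≤ ∑ j, m j := Finset.single_le_sum (fun _ _ => Nat.zero_le _) (Finset.mem_univ i)
      · rw [sum_eq_finsupp_sum]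
        exact (MvPolynomial.le_totalDegree hm).trans hQ
  rw [Finset.sum_congr rfl hterm, Finset.sum_ite_eq' Q.support 0
    fun _ => MvPolynomial.coeff 0 Q]
  by_cases h : (0 : Fin d →₀ ℕ) ∈ Q.support
  · rw [if_pos h, MvPolynomial.eval_zero, MvPolynomial.constantCoeff_eq]
  · rw [if_neg h, MvPolynomial.eval_zero, MvPolynomial.constantCoeff_eq,
      MvPolynomial.notMem_support_iff.mp h]

theorem stmt_4 (d : ℕ) (hd : 1 ≤ d) (n : ℕ)
    (ψ : EuclideanSpace ℝ (Fin d) → ℝ)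
    (hψ : ContDiff ℝ (⊤ : ℕ∞) ψ) (hψc : HasCompactSupport ψ)
    (hψ1 : (∫ ξ, ψ ξ) = 1)
    (hψmom : ∀ α : Fin d → ℕ, 1 ≤ (∑ i, α i) → (∑ i, α i) ≤ n →
      (∫ ξ : EuclideanSpace ℝ (Fin d), (∏ i, ξ i ^ α i) * ψ ξ) = 0)
    (P : MvPolynomial (Fin d) ℂ) (hP : P.totalDegree ≤ n)
    (x : EuclideanSpace ℝ (Fin d)) :
    (∫ η : EuclideanSpace ℝ (Fin d),
        MvPolynomial.eval (fun i => (η i : ℂ)) P * (ψ (x - η) : ℂ))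
      = MvPolynomial.eval (fun i => (x i : ℂ)) P := by
  set g : EuclideanSpace ℝ (Fin d) → ℂ :=
    fun η => MvPolynomial.eval (fun i => (η i : ℂ)) P * (ψ (x - η) : ℂ) with hg
  set Q : MvPolynomial (Fin d) ℂ :=
    MvPolynomial.bind₁ (fun i => MvPolynomial.C ((x i : ℂ)) - MvPolynomial.X i) P with hQdef
  have hQdeg : Q.totalDegree ≤ n := by
    rw [hQdef, ← MvPolynomial.aeval_eq_bind₁, MvPolynomial.aeval_def, MvPolynomial.eval₂_eq]
    refine totalDegree_sum_le' _ _ _ fun m hm => ?_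
    refine (MvPolynomial.totalDegree_mul _ _).trans ?_
    have h1 : (algebraMap ℂ (MvPolynomial (Fin d) ℂ) (MvPolynomial.coeff m P)).totalDegree = 0 := by
      rw [MvPolynomial.algebraMap_eq, MvPolynomial.totalDegree_C]
    rw [h1, zero_add]
    refine (MvPolynomial.totalDegree_finset_prod _ _).trans ?_
    have hbound : ∀ i ∈ m.support,
        ((MvPolynomial.C ((x i : ℂ)) - MvPolynomial.X i) ^ m i).totalDegree ≤ m i := by
      intro i _
      refine (MvPolynomial.totalDegree_pow _ _).trans ?_
      have : (MvPolynomial.C ((x i : ℂ)) - MvPolynomial.X i).totalDegree ≤ 1 :=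
        (MvPolynomial.totalDegree_sub _ _).trans <| by
          simp [MvPolynomial.totalDegree_C, MvPolynomial.totalDegree_X]
      calc m i * (MvPolynomial.C ((x i : ℂ)) - MvPolynomial.X i).totalDegree
          ≤ m i * 1 := Nat.mul_le_mul_left (m i) this
        _ = m i := Nat.mul_one _
    refine (Finset.sum_le_sum hbound).trans ?_
    have : (∑ i ∈ m.support, m i) = m.sum fun _ e => e := rfl
    rw [this]
    exact (MvPolynomial.le_totalDegree hm).trans hP
  have heval : ∀ (f : Fin d → ℂ) (p : MvPolynomial (Fin d) ℂ),
      MvPolynomial.eval f p = MvPolynomial.aeval f p := by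
    intro f p
    rw [← MvPolynomial.coe_aeval_eq_eval]
    rfl
  have hQeval : ∀ ξ : EuclideanSpace ℝ (Fin d),
      MvPolynomial.eval (fun i => (ξ i : ℂ)) Q
        = MvPolynomial.eval (fun i => ((x i : ℂ) - ξ i)) P := by
    intro ξ
    rw [hQdef, heval, MvPolynomial.aeval_bind₁]
    rw [heval]
    simp
  have hQ0 : MvPolynomial.eval 0 Q = MvPolynomial.eval (fun i => (x i : ℂ)) P := by
    rw [hQdef, heval, MvPolynomial.aeval_bind₁]
    rw [heval]
    simp
  have hsub : (∫ η, g η) = ∫ ξ, g (x - ξ) := (integral_sub_left_eq_self g volume x).symm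
  have hgx : ∀ ξ : EuclideanSpace ℝ (Fin d),
      g (x - ξ) = MvPolynomial.eval (fun i => (ξ i : ℂ)) Q * (ψ ξ : ℂ) := by
    intro ξ
    rw [hQeval ξ]
    show MvPolynomial.eval (fun i => (((x - ξ) i : ℝ) : ℂ)) P * (ψ (x - (x - ξ)) : ℂ) = _
    rw [sub_sub_cancel]
    congr 1
    refine congrArg (fun f => MvPolynomial.eval f P) (funext fun i => ?_)
    rw [PiLp.sub_apply]
    push_cast
    ring
  calc (∫ η, g η) = ∫ ξ, MvPolynomial.eval (fun i => (ξ i : ℂ)) Q * (ψ ξ : ℂ) := by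
        rw [hsub]; exact integral_congr_ae (Filter.Eventually.of_forall hgx)
    _ = MvPolynomial.eval 0 Q := key_int d n ψ hψ.continuous hψc hψ1 hψmom Q hQdeg
    _ = MvPolynomial.eval (fun i => (x i : ℂ)) P := hQ0
end

section
/- Let d ≥ 1, let Ω ⊆ ℝ^d be open, let 𝓕 := hyperfilter ℕ be the hyperfilter (a fixed ultrafilter on ℕ extending the cofinite filter), and say that a sequence ξ : ℕ → ℝ^d is near-standard at x ∈ ℝ^d if for every δ > 0 the set {n : ‖ξ_n − x‖ < δ} belongs to 𝓕. Let f : ℕ → (ℝ^d → ℂ) be a sequence of functions each infinitely differentiable on Ω. Then the following are equivalent: (a) for every x ∈ Ω and every sequence ξ : ℕ → ℝ^d with ξ_n ∈ Ω for all n which is near-standard at x, the set {n : f_n(ξ_n) = 0} belongs to 𝓕; (b) for every compact set K ⊆ Ω, the set {n : f_n(x) = 0 for all x ∈ K} belongs to 𝓕. -/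
open Filter Topology

/-- A sequence `ξ` of points of `ℝ^d` is near-standard at `x` (with respect to the
hyperfilter on `ℕ`) if for every `δ > 0` the set `{n : ‖ξ n - x‖ < δ}` belongs to the
hyperfilter. -/
def NearStandard {d : ℕ} (ξ : ℕ → EuclideanSpace ℝ (Fin d))
    (x : EuclideanSpace ℝ (Fin d)) : Prop :=
  ∀ δ : ℝ, 0 < δ → {n | ‖ξ n - x‖ < δ} ∈ hyperfilter ℕ

theorem stmt_9 (d : ℕ) (hd : 1 ≤ d)
    (Ω : Set (EuclideanSpace ℝ (Fin d))) (hΩ : IsOpen Ω)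
    (f : ℕ → EuclideanSpace ℝ (Fin d) → ℂ)
    (hf : ∀ n, ContDiffOn ℝ (⊤ : ℕ∞) (f n) Ω) :
    (∀ x ∈ Ω, ∀ ξ : ℕ → EuclideanSpace ℝ (Fin d),
        (∀ n, ξ n ∈ Ω) → NearStandard ξ x →
        {n | f n (ξ n) = 0} ∈ hyperfilter ℕ) ↔
    (∀ K : Set (EuclideanSpace ℝ (Fin d)), IsCompact K → K ⊆ Ω →
        {n | ∀ x ∈ K, f n x = 0} ∈ hyperfilter ℕ) := by
  constructor
  · intro h K hK hKΩ
    rcases K.eq_empty_or_nonempty with rfl | ⟨x0, hx0⟩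
    · simp only [Set.mem_empty_iff_false, false_implies, implies_true, Set.setOf_true]
      exact univ_mem
    by_contra hS
    have hA : {n | ∃ x ∈ K, f n x ≠ 0} ∈ hyperfilter ℕ := by
      have hc := (Ultrafilter.compl_mem_iff_notMem
        (f := hyperfilter ℕ) (s := {n | ∀ x ∈ K, f n x = 0})).2 hS
      refine mem_of_superset hc ?_
      intro n hn
      simp only [Set.mem_compl_iff, Set.mem_setOf_eq] at hn ⊢
      push_neg at hn
      exact hn
    classical
    set ξ : ℕ → EuclideanSpace ℝ (Fin d) := fun n =>
      if hn : ∃ x ∈ K, f n x ≠ 0 then hn.choose else x0 with hξ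
    have hξK : ∀ n, ξ n ∈ K := by
      intro n
      by_cases hn : ∃ x ∈ K, f n x ≠ 0
      · simp only [hξ, dif_pos hn]; exact hn.choose_spec.1
      · simp only [hξ, dif_neg hn]; exact hx0
    have hξne : ∀ n ∈ {n | ∃ x ∈ K, f n x ≠ 0}, f n (ξ n) ≠ 0 := by
      intro n hn
      have hn' : ∃ x ∈ K, f n x ≠ 0 := hn
      simp only [hξ, dif_pos hn']
      exact hn'.choose_spec.2
    -- the pushforward ultrafilter converges to some point of K
    have hle : ↑((hyperfilter ℕ : Ultrafilter ℕ).map ξ) ≤ Filter.principal K := by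
      rw [le_principal_iff]
      exact mem_map.2 (univ_mem' hξK)
    obtain ⟨x, hxK, hxlim⟩ := hK.ultrafilter_le_nhds _ hle
    have hns : NearStandard ξ x := by
      intro δ hδ
      have : Metric.ball x δ ∈ 𝓝 x := Metric.ball_mem_nhds x hδ
      have := hxlim this
      refine mem_of_superset this ?_
      intro n hn
      simp only [Set.mem_setOf_eq, Ultrafilter.mem_coe, Set.mem_preimage,
        Metric.mem_ball] at hn ⊢
      rwa [← dist_eq_norm]
    have hzero := h x (hKΩ hxK) ξ (fun n => hKΩ (hξK n)) hns
    obtain ⟨n, hn1, hn2⟩ := Filter.nonempty_of_mem (inter_mem hzero hA)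
    exact hξne n hn2 hn1
  · intro h x hx ξ hξΩ hns
    obtain ⟨ε, hε, hball⟩ := Metric.isOpen_iff.1 hΩ x hx
    have hKsub : Metric.closedBall x (ε / 2) ⊆ Ω :=
      (Metric.closedBall_subset_ball (by linarith)).trans hball
    have hK := h (Metric.closedBall x (ε / 2)) (isCompact_closedBall x _) hKsub
    filter_upwards [hK, hns (ε / 2) (by linarith)] with n hn hd
    exact hn (ξ n) (Metric.mem_closedBall.2 (by rw [dist_eq_norm]; exact hd.le))
end

section
/- Let d ≥ 1, let Ω ⊆ ℝ^d be open, let 𝓕 := hyperfilter ℕ be the hyperfilter (a fixed ultrafilter on ℕ extending the cofinite filter), and say that a sequence ξ : ℕ → ℝ^d is near-standard at x ∈ ℝ^d if for every δ > 0 the set {n : ‖ξ_n − x‖ < δ} belongs to 𝓕. Let f : ℕ → (ℝ^d → ℂ) be a sequence of functions each infinitely differentiable on Ω, and suppose that for every x ∈ Ω and every sequence ξ : ℕ → ℝ^d with ξ_n ∈ Ω for all n which is near-standard at x, the set {n : f_n(ξ_n) = 0} belongs to 𝓕. Then for every x ∈ Ω and every such near-standard sequence ξ, the set {n : the Fréchet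 derivative of f_n at ξ_n is the zero map} also belongs to 𝓕. -/
open Filter

/-- If the derivative of `g` at `z ∈ Ω` is nonzero, then arbitrarily close to `z`
there is a point of `Ω` where `g` is nonzero. -/
lemma exists_near_ne_zero {d : ℕ} {Ω : Set (EuclideanSpace ℝ (Fin d))} (hΩ : IsOpen Ω)
    (g : EuclideanSpace ℝ (Fin d) → ℂ) (z : EuclideanSpace ℝ (Fin d)) (hz : z ∈ Ω)
    (h : fderiv ℝ g z ≠ 0) {ε : ℝ} (hε : 0 < ε) :
    ∃ y, y ∈ Ω ∧ ‖y - z‖ < ε ∧ g y ≠ 0 := by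
  obtain ⟨δ, δpos, hball⟩ := Metric.isOpen_iff.mp hΩ z hz
  by_contra hcon
  push_neg at hcon
  have heq : g =ᶠ[nhds z] fun _ => (0 : ℂ) := by
    filter_upwards [Metric.ball_mem_nhds z (lt_min hε δpos)] with y hy
    have hyd : dist y z < min ε δ := hy
    have hyΩ : y ∈ Ω := hball (Metric.mem_ball.mpr (lt_of_lt_of_le hyd (min_le_right _ _)))
    have : ‖y - z‖ < ε := by
      rw [← dist_eq_norm]; exact lt_of_lt_of_le hyd (min_le_left _ _)
    exact hcon y hyΩ this
  exact h (heq.fderiv_eq.trans (fderiv_const_apply 0))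

theorem stmt_10 (d : ℕ) (hd : 1 ≤ d)
    (Ω : Set (EuclideanSpace ℝ (Fin d))) (hΩ : IsOpen Ω)
    (f : ℕ → EuclideanSpace ℝ (Fin d) → ℂ)
    (hf : ∀ n, ContDiffOn ℝ (⊤ : ℕ∞) (f n) Ω)
    (hvanish : ∀ x ∈ Ω, ∀ ξ : ℕ → EuclideanSpace ℝ (Fin d),
        (∀ n, ξ n ∈ Ω) → NearStandard ξ x →
        {n | f n (ξ n) = 0} ∈ hyperfilter ℕ) :
    ∀ x ∈ Ω, ∀ ξ : ℕ → EuclideanSpace ℝ (Fin d),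
        (∀ n, ξ n ∈ Ω) → NearStandard ξ x →
        {n | fderiv ℝ (f n) (ξ n) = 0} ∈ hyperfilter ℕ := by
  intro x hx ξ hξ hns
  by_contra hS
  rw [← Ultrafilter.compl_mem_iff_notMem] at hS
  -- choose perturbed points
  have hchoice : ∀ n, ∃ y, y ∈ Ω ∧ ‖y - ξ n‖ < 1 / (n + 1) ∧
      (fderiv ℝ (f n) (ξ n) ≠ 0 → f n y ≠ 0) := by
    intro n
    by_cases h : fderiv ℝ (f n) (ξ n) = 0
    · exact ⟨ξ n, hξ n, by simpa using (by positivity : (0:ℝ) < 1 / (n + 1)), fun h' => absurd h h'⟩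
    · obtain ⟨y, hyΩ, hyd, hy0⟩ := exists_near_ne_zero hΩ (f n) (ξ n) (hξ n) h
        (ε := 1 / (n + 1)) (by positivity)
      exact ⟨y, hyΩ, hyd, fun _ => hy0⟩
  choose y hyΩ hyd hy0 using hchoice
  have hnsy : NearStandard y x := by
    intro δ hδ
    have h1 : {n | ‖ξ n - x‖ < δ / 2} ∈ hyperfilter ℕ := hns (δ / 2) (by positivity)
    have h2 : {n : ℕ | 1 / ((n : ℝ) + 1) < δ / 2} ∈ hyperfilter ℕ := by
      apply Filter.hyperfilter_le_cofinite
      have h0 : Tendsto (fun n : ℕ => 1 / ((n : ℝ) + 1)) atTop (nhds 0) :=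
        tendsto_one_div_add_atTop_nhds_zero_nat
      have : ∀ᶠ n : ℕ in atTop, 1 / ((n : ℝ) + 1) < δ / 2 :=
        h0.eventually_lt_const (by positivity)
      rw [Nat.cofinite_eq_atTop]
      exact this
    filter_upwards [h1, h2] with n hn1 hn2
    calc ‖y n - x‖ ≤ ‖y n - ξ n‖ + ‖ξ n - x‖ := norm_sub_le_norm_sub_add_norm_sub _ _ _
      _ < δ / 2 + δ / 2 := add_lt_add (lt_trans (hyd n) hn2) hn1
      _ = δ := by ring
  have hv := hvanish x hx y hyΩ hnsy
  have : ({n | fderiv ℝ (f n) (ξ n) = 0}ᶜ ∩ {n | f n (y n) = 0} : Set ℕ) ∈ hyperfilter ℕ :=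
    inter_mem hS hv
  obtain ⟨n, hn1, hn2⟩ := Filter.nonempty_of_mem this
  exact hy0 n hn1 hn2
end

section
/- Let d ≥ 1, let Ω ⊆ ℝ^d be open and connected, let 𝓕 := hyperfilter ℕ be the hyperfilter (a fixed ultrafilter on ℕ extending the cofinite filter), and say that a sequence ξ : ℕ → ℝ^d is near-standard at x ∈ ℝ^d if for every δ > 0 the set {n : ‖ξ_n − x‖ < δ} belongs to 𝓕. Let f : ℕ → (ℝ^d → ℂ) be a sequence of functions each infinitely differentiable on Ω, and suppose that for every x ∈ Ω and every sequence ξ : ℕ → ℝ^d with ξ_n ∈ Ω for all n which is near-standard at x, the set {n : the Fréchet derivative of f_n at ξ_n is the zero map} belongs to 𝓕. Then there exists a sequence c : ℕ → ℂ such that for every x ∈ Ω and every such near-standard sequence ξ, the set {n : f_n(ξ_n) = c_n} belongs to 𝓕. -/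
open Filter

/-- Key step: the gradient of `f n` vanishes on a whole fixed closed ball around each
standard point `x ∈ Ω`, for hyperfilter-almost all `n`. -/
lemma key_ball {d : ℕ} {Ω : Set (EuclideanSpace ℝ (Fin d))} (hΩ : IsOpen Ω)
    {f : ℕ → EuclideanSpace ℝ (Fin d) → ℂ}
    (hgrad : ∀ x ∈ Ω, ∀ ξ : ℕ → EuclideanSpace ℝ (Fin d),
        (∀ n, ξ n ∈ Ω) → NearStandard ξ x →
        {n | fderiv ℝ (f n) (ξ n) = 0} ∈ hyperfilter ℕ)
    {x : EuclideanSpace ℝ (Fin d)} (hx : x ∈ Ω) :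
    ∃ r > 0, Metric.closedBall x r ⊆ Ω ∧
      {n | ∀ y ∈ Metric.closedBall x r, fderiv ℝ (f n) y = 0} ∈ hyperfilter ℕ := by
  classical
  obtain ⟨r₀, hr₀, hball⟩ := Metric.isOpen_iff.1 hΩ x hx
  have hcb : Metric.closedBall x (r₀ / 2) ⊆ Ω :=
    (Metric.closedBall_subset_ball (by linarith)).trans hball
  by_contra h
  push_neg at h
  -- `P n m` : there is a bad point within `min (r₀/2) (1/(m+1))` of `x`.
  set P : ℕ → ℕ → Prop := fun n m =>
    ∃ y ∈ Metric.closedBall x (min (r₀ / 2) (1 / ((m : ℝ) + 1))),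
      fderiv ℝ (f n) y ≠ 0 with hPdef
  have rpos : ∀ m : ℕ, (0 : ℝ) < min (r₀ / 2) (1 / ((m : ℝ) + 1)) := fun m =>
    lt_min (by linarith) (by positivity)
  have rsub : ∀ m : ℕ,
      Metric.closedBall x (min (r₀ / 2) (1 / ((m : ℝ) + 1))) ⊆ Ω := fun m =>
    (Metric.closedBall_subset_closedBall (min_le_left _ _)).trans hcb
  have hP : ∀ m, {n | P n m} ∈ hyperfilter ℕ := by
    intro m
    have hnot := h (min (r₀ / 2) (1 / ((m : ℝ) + 1))) (rpos m) (rsub m)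
    have := (Ultrafilter.compl_mem_iff_notMem
      (f := hyperfilter ℕ)
      (s := {n | ∀ y ∈ Metric.closedBall x (min (r₀ / 2) (1 / ((m : ℝ) + 1))),
        fderiv ℝ (f n) y = 0})).2 hnot
    convert this using 1
    ext n
    simp only [Set.mem_compl_iff, Set.mem_setOf_eq, hPdef]
    push_neg
    rfl
  have hPmono : ∀ n, ∀ m m' : ℕ, m ≤ m' → P n m' → P n m := by
    intro n m m' hmm' ⟨y, hy, hy'⟩
    refine ⟨y, Metric.closedBall_subset_closedBall ?_ hy, hy'⟩
    refine min_le_min le_rfl ?_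
    apply one_div_le_one_div_of_le (by positivity)
    have : (m : ℝ) ≤ m' := Nat.cast_le.2 hmm'
    linarith
  -- greatest `m ≤ n` with `P n m`
  set k : ℕ → ℕ := fun n => Nat.findGreatest (P n) n with hk
  set ξ : ℕ → EuclideanSpace ℝ (Fin d) := fun n =>
    if h : P n (k n) then h.choose else x with hξ
  have hξmem : ∀ n, ξ n ∈ Metric.closedBall x (min (r₀ / 2) (1 / ((k n : ℝ) + 1))) := by
    intro n
    simp only [hξ]
    split
    · next h' => exact h'.choose_spec.1
    · simpa using le_of_lt (rpos (k n))
  have hξΩ : ∀ n, ξ n ∈ Ω := fun n => rsub (k n) (hξmem n)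
  have hns : NearStandard ξ x := by
    intro δ hδ
    obtain ⟨K, hK⟩ := exists_nat_one_div_lt hδ
    have hco : {n : ℕ | K ≤ n} ∈ hyperfilter ℕ := by
      apply mem_hyperfilter_of_finite_compl
      have : {n : ℕ | K ≤ n}ᶜ = Set.Iio K := by ext n; simp [Set.mem_Iio, not_le]
      rw [this]; exact Set.finite_Iio K
    filter_upwards [hP K, hco] with n hPn hKn
    have hkK : K ≤ k n := Nat.le_findGreatest hKn hPn
    have h1 : (1 : ℝ) / ((k n : ℝ) + 1) ≤ 1 / ((K : ℝ) + 1) := by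
      apply one_div_le_one_div_of_le (by positivity)
      have : (K : ℝ) ≤ k n := Nat.cast_le.2 hkK
      linarith
    have := hξmem n
    rw [Metric.mem_closedBall, dist_eq_norm] at this
    calc ‖ξ n - x‖ ≤ min (r₀ / 2) (1 / ((k n : ℝ) + 1)) := this
      _ ≤ 1 / ((k n : ℝ) + 1) := min_le_right _ _
      _ ≤ 1 / ((K : ℝ) + 1) := h1
      _ < δ := hK
  have hbad : {n | P n 0} ⊆ {n | fderiv ℝ (f n) (ξ n) ≠ 0} := by
    intro n hPn
    have hPk : P n (k n) := Nat.findGreatest_spec (Nat.zero_le n) hPn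
    simp only [hξ, Set.mem_setOf_eq, dif_pos hPk]
    exact hPk.choose_spec.2
  have hgood := hgrad x hx ξ hξΩ hns
  have hmem : ({n | fderiv ℝ (f n) (ξ n) = 0} ∩ {n | P n 0}) ∈ hyperfilter ℕ :=
    inter_mem hgood (hP 0)
  obtain ⟨n, hn1, hn2⟩ := Filter.nonempty_of_mem hmem
  exact hbad hn2 hn1

theorem stmt_11 (d : ℕ) (hd : 1 ≤ d)
    (Ω : Set (EuclideanSpace ℝ (Fin d))) (hΩ : IsOpen Ω) (hconn : IsConnected Ω)
    (f : ℕ → EuclideanSpace ℝ (Fin d) → ℂ)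
    (hf : ∀ n, ContDiffOn ℝ (⊤ : ℕ∞) (f n) Ω)
    (hgrad : ∀ x ∈ Ω, ∀ ξ : ℕ → EuclideanSpace ℝ (Fin d),
        (∀ n, ξ n ∈ Ω) → NearStandard ξ x →
        {n | fderiv ℝ (f n) (ξ n) = 0} ∈ hyperfilter ℕ) :
    ∃ c : ℕ → ℂ, ∀ x ∈ Ω, ∀ ξ : ℕ → EuclideanSpace ℝ (Fin d),
        (∀ n, ξ n ∈ Ω) → NearStandard ξ x →
        {n | f n (ξ n) = c n} ∈ hyperfilter ℕ := by
  classical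
  obtain ⟨x₀, hx₀⟩ := hconn.nonempty
  -- local constancy: around each point of Ω there is a ball on which f n is constant a.e. n
  have hloc : ∀ x ∈ Ω, ∃ r > 0, Metric.ball x r ⊆ Ω ∧
      {n | ∀ y ∈ Metric.ball x r, f n y = f n x} ∈ hyperfilter ℕ := by
    intro x hx
    obtain ⟨r, hr, hsub, hA⟩ := key_ball hΩ hgrad hx
    refine ⟨r, hr, (Metric.ball_subset_closedBall).trans hsub, ?_⟩
    filter_upwards [hA] with n hn
    intro y hy
    have hdiff : DifferentiableOn ℝ (f n) (Metric.ball x r) :=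
      ((hf n).differentiableOn (by simp)).mono
        ((Metric.ball_subset_closedBall).trans hsub)
    have := (convex_ball x r).is_const_of_fderivWithin_eq_zero hdiff
      (fun z hz => by
        rw [fderivWithin_of_isOpen Metric.isOpen_ball hz]
        exact hn z (Metric.ball_subset_closedBall hz)) hy (Metric.mem_ball_self hr)
    exact this
  set Q : EuclideanSpace ℝ (Fin d) → Prop :=
    fun x => {n | f n x = f n x₀} ∈ hyperfilter ℕ with hQ
  -- Q is locally constant on Ω
  have hlocQ : ∀ x ∈ Ω, ∃ r > 0, Metric.ball x r ⊆ Ω ∧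
      ∀ y ∈ Metric.ball x r, (Q y ↔ Q x) := by
    intro x hx
    obtain ⟨r, hr, hsub, hA⟩ := hloc x hx
    refine ⟨r, hr, hsub, fun y hy => ?_⟩
    constructor
    · intro hQy
      have : ({n | ∀ z ∈ Metric.ball x r, f n z = f n x} ∩ {n | f n y = f n x₀}) ∈
          hyperfilter ℕ := inter_mem hA hQy
      refine mem_of_superset this ?_
      rintro n ⟨h1, h2⟩
      simp only [Set.mem_setOf_eq] at *
      rw [← h1 y hy]; exact h2
    · intro hQx
      have : ({n | ∀ z ∈ Metric.ball x r, f n z = f n x} ∩ {n | f n x = f n x₀}) ∈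
          hyperfilter ℕ := inter_mem hA hQx
      refine mem_of_superset this ?_
      rintro n ⟨h1, h2⟩
      simp only [Set.mem_setOf_eq] at *
      rw [h1 y hy]; exact h2
  -- connectedness argument: Q holds on all of Ω
  have hQall : ∀ x ∈ Ω, Q x := by
    by_contra hcon
    push_neg at hcon
    obtain ⟨z, hzΩ, hzQ⟩ := hcon
    set U : Set (EuclideanSpace ℝ (Fin d)) := {x | x ∈ Ω ∧ Q x} with hU
    set V : Set (EuclideanSpace ℝ (Fin d)) := {x | x ∈ Ω ∧ ¬ Q x} with hV
    have hUopen : IsOpen U := by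
      rw [Metric.isOpen_iff]
      rintro x ⟨hxΩ, hxQ⟩
      obtain ⟨r, hr, hsub, hiff⟩ := hlocQ x hxΩ
      exact ⟨r, hr, fun y hy => ⟨hsub hy, (hiff y hy).2 hxQ⟩⟩
    have hVopen : IsOpen V := by
      rw [Metric.isOpen_iff]
      rintro x ⟨hxΩ, hxQ⟩
      obtain ⟨r, hr, hsub, hiff⟩ := hlocQ x hxΩ
      exact ⟨r, hr, fun y hy => ⟨hsub hy, fun hQy => hxQ ((hiff y hy).1 hQy)⟩⟩
    have hQx₀ : Q x₀ := by
      exact univ_mem' (fun n => rfl)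
    obtain ⟨w, hwΩ, hwU, hwV⟩ := hconn.isPreconnected U V hUopen hVopen
      (fun y hy => by by_cases h : Q y
                      · exact Or.inl ⟨hy, h⟩
                      · exact Or.inr ⟨hy, h⟩)
      ⟨x₀, hx₀, hx₀, hQx₀⟩ ⟨z, hzΩ, hzΩ, hzQ⟩
    exact hwV.2 hwU.2
  -- conclusion
  refine ⟨fun n => f n x₀, fun x hx ξ hξΩ hns => ?_⟩
  obtain ⟨r, hr, hsub, hA⟩ := hloc x hx
  filter_upwards [hA, hns r hr, hQall x hx] with n h1 h2 h3
  have hyball : ξ n ∈ Metric.ball x r := by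
    rw [Metric.mem_ball, dist_eq_norm]; exact h2
  rw [h1 (ξ n) hyball]; exact h3
end

section
/- Let d ≥ 1, let Ω ⊆ ℝ^d be open, let 𝓕 := hyperfilter ℕ be the hyperfilter (a fixed ultrafilter on ℕ extending the cofinite filter), and say that a sequence ξ : ℕ → ℝ^d is near-standard at x ∈ ℝ^d if for every δ > 0 the set {n : ‖ξ_n − x‖ < δ} belongs to 𝓕. Let ρ : ℕ → ℝ satisfy ρ_n > 0 for all n and be infinitesimal along 𝓕 (for every δ > 0 the set {n : ρ_n < δ} belongs to 𝓕). Let m ∈ ℕ, let g_1, …, g_m : ℝ^d → ℂ be infinitely differentiable on Ω, and let c_1, …, c_m : ℕ → ℂ be sequences such that for each j there is N_j ∈ ℕ with {n : |c_j(n)| ≤ ρ_n^{−N_j}} ∈ 𝓕. Define f_n(x) := Σ_{j=1}^m c_j(n)·g_j(x). Then for every x ∈ Ω and every sequence ξ : ℕ → ℝ^d with ξ_n ∈ Ω for all n which is near-standard at x, there exists N ∈ ℕ such that for every order k ∈ ℕ the set {n : ‖iteratedFDerivWithin ℝ k f_n Ω (ξ_n)‖ ≤ ρ_n^{−N}} belongs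 to 𝓕. -/
open Filter

theorem stmt_13 (d : ℕ) (hd : 1 ≤ d)
    (Ω : Set (EuclideanSpace ℝ (Fin d))) (hΩ : IsOpen Ω)
    (ρ : ℕ → ℝ) (hρpos : ∀ n, 0 < ρ n)
    (hρinf : ∀ δ : ℝ, 0 < δ → {n | ρ n < δ} ∈ hyperfilter ℕ)
    (m : ℕ) (g : Fin m → EuclideanSpace ℝ (Fin d) → ℂ)
    (hg : ∀ j, ContDiffOn ℝ (⊤ : ℕ∞) (g j) Ω)
    (c : Fin m → ℕ → ℂ)
    (hc : ∀ j, ∃ N : ℕ, {n | ‖c j n‖ ≤ ρ n ^ (-(N : ℤ))} ∈ hyperfilter ℕ)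
    (f : ℕ → EuclideanSpace ℝ (Fin d) → ℂ)
    (hf : ∀ n x, f n x = ∑ j, c j n * g j x) :
    ∀ x ∈ Ω, ∀ ξ : ℕ → EuclideanSpace ℝ (Fin d),
      (∀ n, ξ n ∈ Ω) → NearStandard ξ x →
      ∃ N : ℕ, ∀ k : ℕ,
        {n | ‖iteratedFDerivWithin ℝ k (f n) Ω (ξ n)‖ ≤ ρ n ^ (-(N : ℤ))}
          ∈ hyperfilter ℕ := by
  intro x hx ξ hξ hnear
  choose N hN using hc
  set N0 : ℕ := Finset.univ.sup N with hN0def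
  refine ⟨N0 + 1, fun k => ?_⟩
  have hU : UniqueDiffOn ℝ Ω := hΩ.uniqueDiffOn
  -- continuity of the derivatives of the g j at x
  set S : EuclideanSpace ℝ (Fin d) → ℝ :=
    fun y => ∑ j, ‖iteratedFDerivWithin ℝ k (g j) Ω y‖ with hSdef
  have hScont : ContinuousAt S x := by
    rw [hSdef]
    exact tendsto_finset_sum _ fun j _ =>
      (((hg j).continuousOn_iteratedFDerivWithin (by exact_mod_cast le_top) hU).continuousAt
        (hΩ.mem_nhds hx)).norm
  set C : ℝ := S x + 1 with hCdef
  have hC0 : 0 < C := by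
    have : 0 ≤ S x := Finset.sum_nonneg fun j _ => norm_nonneg _
    linarith
  have hev : ∀ᶠ y in nhds x, S y < C := by
    have := hScont.eventually_lt_const (by linarith : S x < C)
    exact this
  rw [Metric.eventually_nhds_iff] at hev
  obtain ⟨δ, hδ0, hδ⟩ := hev
  -- the relevant filter sets
  have hA : {n | ‖ξ n - x‖ < δ} ∈ hyperfilter ℕ := hnear δ hδ0
  have hB : (⋂ j, {n | ‖c j n‖ ≤ ρ n ^ (-(N j : ℤ))}) ∈ hyperfilter ℕ :=
    Filter.iInter_mem.2 fun j => hN j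
  have hD : {n | ρ n < min 1 C⁻¹} ∈ hyperfilter ℕ :=
    hρinf _ (lt_min one_pos (inv_pos.2 hC0))
  filter_upwards [hA, hB, hD] with n hnA hnB hnD
  have hρn := hρpos n
  have hρ1 : ρ n ≤ 1 := le_of_lt (lt_of_lt_of_le hnD (min_le_left _ _))
  have hρC : C ≤ (ρ n)⁻¹ := by
    have h1 : ρ n < C⁻¹ := lt_of_lt_of_le hnD (min_le_right _ _)
    have := (inv_le_inv₀ (inv_pos.2 hC0) hρn).2 h1.le
    simpa using this
  -- derivative of the sum
  have hfeq : f n = fun y => ∑ j, (c j n • g j) y := by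
    funext y; simp [hf n y, Pi.smul_apply, smul_eq_mul]
  have hder : iteratedFDerivWithin ℝ k (f n) Ω (ξ n)
      = ∑ j, c j n • iteratedFDerivWithin ℝ k (g j) Ω (ξ n) := by
    rw [hfeq, show (fun y => ∑ j, (c j n • g j) y) = ∑ j, c j n • g j from by ext y; simp]
    refine (iteratedFDerivWithin_sum_apply (f := fun j => c j n • g j) hU (hξ n)
      (fun j _ => ((((hg j).of_le (by exact_mod_cast le_top)).const_smul (c j n) :
        ContDiffOn ℝ k (c j n • g j) Ω)).contDiffWithinAt (hξ n))).trans ?_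
    exact Finset.sum_congr rfl fun j _ =>
      iteratedFDerivWithin_const_smul_apply (((hg j).of_le (by exact_mod_cast le_top)).contDiffWithinAt (hξ n)) hU (hξ n)
  have hnorm : ‖iteratedFDerivWithin ℝ k (f n) Ω (ξ n)‖
      ≤ ∑ j, ‖c j n‖ * ‖iteratedFDerivWithin ℝ k (g j) Ω (ξ n)‖ := by
    rw [hder]
    refine le_trans (norm_sum_le _ _) (le_of_eq ?_)
    exact Finset.sum_congr rfl fun j _ => by
      rw [norm_smul]
  -- bound each coefficient by ρ n ^ (-N0)
  have hzpow : ∀ j : Fin m, (ρ n : ℝ) ^ (-(N j : ℤ)) ≤ ρ n ^ (-(N0 : ℤ)) := by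
    intro j
    apply zpow_le_zpow_right_of_le_one₀ hρn hρ1
    have : N j ≤ N0 := Finset.le_sup (Finset.mem_univ j)
    omega
  have hzpos : (0 : ℝ) < ρ n ^ (-(N0 : ℤ)) := zpow_pos hρn _
  have hbound : ∑ j, ‖c j n‖ * ‖iteratedFDerivWithin ℝ k (g j) Ω (ξ n)‖
      ≤ ρ n ^ (-(N0 : ℤ)) * S (ξ n) := by
    rw [hSdef, Finset.mul_sum]
    refine Finset.sum_le_sum fun j _ => ?_
    have hcj : ‖c j n‖ ≤ ρ n ^ (-(N0 : ℤ)) := by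
      have := Set.mem_iInter.1 hnB j
      exact le_trans this (hzpow j)
    exact mul_le_mul_of_nonneg_right hcj (norm_nonneg _)
  have hSξ : S (ξ n) < C := hδ (by
    rw [dist_eq_norm]; exact hnA)
  have hSnn : 0 ≤ S (ξ n) := Finset.sum_nonneg fun j _ => norm_nonneg _
  have hfinal : ρ n ^ (-(N0 : ℤ)) * S (ξ n) ≤ ρ n ^ (-((N0 + 1 : ℕ) : ℤ)) := by
    have h1 : ρ n ^ (-(N0 : ℤ)) * S (ξ n) ≤ ρ n ^ (-(N0 : ℤ)) * (ρ n)⁻¹ :=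
      mul_le_mul_of_nonneg_left (le_trans hSξ.le hρC) hzpos.le
    refine le_trans h1 (le_of_eq ?_)
    rw [show (-((N0 + 1 : ℕ) : ℤ)) = -(N0 : ℤ) + (-1) by push_cast; ring,
      zpow_add₀ (ne_of_gt hρn), zpow_neg_one]
  exact le_trans hnorm (le_trans hbound hfinal)
end
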